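/- arXiv:2505.06343 — 2 statements merged into one kernel-verified Lean document; each statement's English description precedes it below -/
import Mathlib

section
/- Let (Ω, ℙ) be a probability space, let γ > 0, ε > 0, δ ∈ (0,1), N ≥ 1 with N ≥ (2γ²/ε²)·log(4/δ), and let (F_1, G_1), …, (F_N, G_N) be independent, identically distributed pairs of real random variables satisfying |F_j| ≤ γ and |G_j| ≤ γ almost surely, with common means E[F_j] = a and E[G_j] = b. Assume |a| ≤ |b| and 0 < ε < |b|. Then, writing F̄ = (1/N)∑_j F_j and Ḡ = (1/N)∑_j G_j, with probability at least 1 − δ one has Ḡ ≠ 0 and |F̄/Ḡ − a/b| ≤ 2ε/(|b| − ε). -/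
open MeasureTheory ProbabilityTheory Real
open scoped BigOperators ENNReal

/-!
Hoeffding's inequality, applied to the `F_j` and to the `G_j` separately, shows that with the
given sample size each empirical mean lies within `ε` of its expectation except with probability
at most `δ / 2`. On the intersection of the two good events `|Ḡ| ≥ |b| - ε > 0`, and
`F̄ b - Ḡ a = (F̄ - a) b - (Ḡ - b) a` has absolute value at most `2 ε |b|` because `|a| ≤ |b|`.
-/

lemma abs_div_sub_div_le_of_abs_sub_le {a b f g ε : ℝ} (hab : |a| ≤ |b|) (hεb : ε < |b|)
    (hf : |f - a| ≤ ε) (hg : |g - b| ≤ ε) :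
    g ≠ 0 ∧ |f / g - a / b| ≤ 2 * ε / (|b| - ε) := by
  have hε : 0 ≤ ε := (abs_nonneg _).trans hf
  have hb : b ≠ 0 := by rintro rfl; simp at hεb; linarith
  have hg_abs : |b| - ε ≤ |g| := by linarith [abs_sub_abs_le_abs_sub b g, abs_sub_comm g b]
  have hg0 : g ≠ 0 := by rintro rfl; simp at hg_abs; linarith
  refine ⟨hg0, ?_⟩
  have hnum : |f * b - g * a| ≤ 2 * ε * |b| :=
    calc |f * b - g * a| = |(f - a) * b - (g - b) * a| := by ring_nf
      _ ≤ |f - a| * |b| + |g - b| * |a| := by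
          simpa only [abs_mul] using abs_sub ((f - a) * b) ((g - b) * a)
      _ ≤ ε * |b| + ε * |b| := by gcongr
      _ = 2 * ε * |b| := by ring
  have hden : (|b| - ε) * |b| ≤ |g * b| := by
    rw [abs_mul]; gcongr
  calc |f / g - a / b| = |f * b - g * a| / |g * b| := by rw [div_sub_div f a hg0 hb, abs_div]
    _ ≤ 2 * ε * |b| / ((|b| - ε) * |b|) :=
        div_le_div₀ (by positivity) hnum (mul_pos (by linarith) (abs_pos.2 hb)) hden
    _ = 2 * ε / (|b| - ε) := mul_div_mul_right _ _ (abs_ne_zero.2 hb)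

lemma ofReal_one_sub_le_measure_of_measureReal_compl_le {Ω : Type*} [MeasurableSpace Ω]
    {μ : Measure Ω} [IsProbabilityMeasure μ] {s : Set Ω} {δ : ℝ} (hδ : 0 ≤ δ)
    (h : μ.real sᶜ ≤ δ) : ENNReal.ofReal (1 - δ) ≤ μ s := by
  have hcover : 1 ≤ μ s + μ sᶜ := by
    simpa [Set.union_compl_self] using measure_union_le (μ := μ) s sᶜ
  have hcompl : μ sᶜ ≤ ENNReal.ofReal δ := by
    rwa [← ofReal_measureReal, ENNReal.ofReal_le_ofReal_iff hδ]
  rw [ENNReal.ofReal_sub 1 hδ, ENNReal.ofReal_one, tsub_le_iff_right]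
  exact hcover.trans (add_le_add_right hcompl _)

namespace ProbabilityTheory.HasSubgaussianMGF

lemma measureReal_abs_ge_le {Ω : Type*} [MeasurableSpace Ω] {μ : Measure Ω}
    [IsFiniteMeasure μ] {X : Ω → ℝ} {c : NNReal} (h : HasSubgaussianMGF X c μ)
    {ε : ℝ} (hε : 0 ≤ ε) :
    μ.real {ω | ε ≤ |X ω|} ≤ 2 * exp (-ε ^ 2 / (2 * c)) := by
  have hsplit : {ω | ε ≤ |X ω|} ⊆ {ω | ε ≤ X ω} ∪ {ω | ε ≤ (-X) ω} :=
    fun ω (hω : ε ≤ |X ω|) => le_abs.1 hω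
  calc μ.real {ω | ε ≤ |X ω|}
      ≤ μ.real {ω | ε ≤ X ω} + μ.real {ω | ε ≤ (-X) ω} :=
        (measureReal_mono hsplit).trans (measureReal_union_le _ _)
    _ ≤ exp (-ε ^ 2 / (2 * c)) + exp (-ε ^ 2 / (2 * c)) :=
        add_le_add (h.measure_ge_le hε) (h.neg.measure_ge_le hε)
    _ = 2 * exp (-ε ^ 2 / (2 * c)) := by ring

end ProbabilityTheory.HasSubgaussianMGF

lemma measureReal_abs_sum_sub_integral_ge_le_of_abs_le {Ω ι : Type*} [MeasurableSpace Ω]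
    [Fintype ι] {μ : Measure Ω} [IsProbabilityMeasure μ] {X : ι → Ω → ℝ}
    (hindep : iIndepFun X μ)
    (hmeas : ∀ i, AEMeasurable (X i) μ) {γ : ℝ} (hbd : ∀ i, ∀ᵐ ω ∂μ, |X i ω| ≤ γ)
    {ε : ℝ} (hε : 0 ≤ ε) :
    μ.real {ω | ε ≤ |∑ i, (X i ω - μ[X i])|} ≤
      2 * exp (-ε ^ 2 / (2 * (Fintype.card ι * γ ^ 2))) := by
  have hcentered : iIndepFun (fun i ω => X i ω - μ[X i]) μ :=
    hindep.comp (fun i (x : ℝ) => x - ∫ ω, X i ω ∂μ) (fun _ => measurable_sub_const _)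
  have hsubG : ∀ i ∈ (Finset.univ : Finset ι),
      HasSubgaussianMGF (fun ω => X i ω - μ[X i]) ((‖γ - -γ‖₊ / 2) ^ 2) μ := fun i _ =>
    hasSubgaussianMGF_of_mem_Icc (hmeas i) ((hbd i).mono fun ω h => abs_le.1 h)
  have hparam :
      ((∑ _i : ι, (‖γ - -γ‖₊ / 2) ^ 2 : NNReal) : ℝ) = Fintype.card ι * γ ^ 2 := by
    simp [← two_mul, sq_abs]
  have := (HasSubgaussianMGF.sum_of_iIndepFun hcentered hsubG).measureReal_abs_ge_le hε
  rwa [hparam] at this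

lemma measureReal_abs_mean_sub_gt_le {Ω : Type*} [MeasurableSpace Ω] {μ : Measure Ω}
    [IsProbabilityMeasure μ] {N : ℕ} {X : Fin N → Ω → ℝ} (hindep : iIndepFun X μ)
    (hmeas : ∀ j, AEMeasurable (X j) μ) {γ ε δ a : ℝ} (hγ : 0 < γ) (hε : 0 < ε)
    (hδ0 : 0 < δ) (hδ4 : δ < 4) (hN : 2 * γ ^ 2 / ε ^ 2 * log (4 / δ) ≤ N)
    (hbd : ∀ j, ∀ᵐ ω ∂μ, |X j ω| ≤ γ) (ha : ∀ j, ∫ ω, X j ω ∂μ = a) :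
    μ.real {ω | ε < |(1 / N : ℝ) * ∑ j, X j ω - a|} ≤ δ / 2 := by
  have hlog : 0 < log (4 / δ) := log_pos (by rw [lt_div_iff₀ hδ0]; linarith)
  have hNpos : (0 : ℝ) < N := lt_of_lt_of_le (by positivity) hN
  have hsub : {ω | ε < |(1 / N : ℝ) * ∑ j, X j ω - a|} ⊆
      {ω | N * ε ≤ |∑ j, (X j ω - μ[X j])|} := by
    intro ω (hω : ε < |(1 / N : ℝ) * ∑ j, X j ω - a|)
    have hsum : ∑ j, (X j ω - μ[X j]) = N * ((1 / N : ℝ) * ∑ j, X j ω - a) := by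
      simp only [ha, Finset.sum_sub_distrib, Finset.sum_const, Finset.card_univ,
        Fintype.card_fin, nsmul_eq_mul]
      field_simp
    show N * ε ≤ |∑ j, (X j ω - μ[X j])|
    rw [hsum, abs_mul, abs_of_pos hNpos]
    exact mul_le_mul_of_nonneg_left hω.le hNpos.le
  have hexponent : log (4 / δ) ≤ (N * ε) ^ 2 / (2 * (N * γ ^ 2)) := by
    calc log (4 / δ) ≤ N * ε ^ 2 / (2 * γ ^ 2) := by
          rw [le_div_iff₀ (by positivity)]
          calc log (4 / δ) * (2 * γ ^ 2) = 2 * γ ^ 2 / ε ^ 2 * log (4 / δ) * ε ^ 2 := by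
                field_simp
            _ ≤ N * ε ^ 2 := by gcongr
      _ = (N * ε) ^ 2 / (2 * (N * γ ^ 2)) := by field_simp
  calc μ.real {ω | ε < |(1 / N : ℝ) * ∑ j, X j ω - a|}
      ≤ μ.real {ω | N * ε ≤ |∑ j, (X j ω - μ[X j])|} := measureReal_mono hsub
    _ ≤ 2 * exp (-(N * ε) ^ 2 / (2 * (N * γ ^ 2))) := by
        simpa using
          measureReal_abs_sum_sub_integral_ge_le_of_abs_le hindep hmeas hbd (by positivity)
    _ ≤ 2 * exp (-log (4 / δ)) := by
        gcongr
        rw [neg_div]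
        exact neg_le_neg hexponent
    _ = δ / 2 := by
        rw [exp_neg, exp_log (by positivity)]
        field_simp
        ring

theorem stmt2_general {Ω : Type*} [MeasurableSpace Ω] (P : Measure Ω) [IsProbabilityMeasure P]
    (γ ε δ : ℝ) (hγ : 0 < γ) (hε : 0 < ε) (hδ0 : 0 < δ) (hδ1 : δ < 1)
    (N : ℕ)
    (hN : 2 * γ ^ 2 / ε ^ 2 * Real.log (4 / δ) ≤ (N : ℝ))
    (F G : Fin N → Ω → ℝ)
    (hmeas : ∀ j, Measurable fun ω => (F j ω, G j ω))
    (hindep : iIndepFun (fun j ω => (F j ω, G j ω)) P)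
    (hFbd : ∀ j, ∀ᵐ ω ∂P, |F j ω| ≤ γ)
    (hGbd : ∀ j, ∀ᵐ ω ∂P, |G j ω| ≤ γ)
    (a b : ℝ) (ha : ∀ j, ∫ ω, F j ω ∂P = a) (hb : ∀ j, ∫ ω, G j ω ∂P = b)
    (hab : |a| ≤ |b|) (hεb : ε < |b|) :
    ENNReal.ofReal (1 - δ) ≤
      P {ω | ((1 / N : ℝ) * ∑ j, G j ω) ≠ 0 ∧
          |((1 / N : ℝ) * ∑ j, F j ω) / ((1 / N : ℝ) * ∑ j, G j ω) - a / b| ≤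
            2 * ε / (|b| - ε)} := by
  have hFind : iIndepFun F P := hindep.comp (fun _ => Prod.fst) fun _ => measurable_fst
  have hGind : iIndepFun G P := hindep.comp (fun _ => Prod.snd) fun _ => measurable_snd
  have hF := measureReal_abs_mean_sub_gt_le hFind (fun j => (hmeas j).fst.aemeasurable)
    hγ hε hδ0 (by linarith) hN hFbd ha
  have hG := measureReal_abs_mean_sub_gt_le hGind (fun j => (hmeas j).snd.aemeasurable)
    hγ hε hδ0 (by linarith) hN hGbd hb
  refine ofReal_one_sub_le_measure_of_measureReal_compl_le hδ0.le ?_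
  calc _ ≤ P.real ({ω | ε < |(1 / N : ℝ) * ∑ j, F j ω - a|} ∪
        {ω | ε < |(1 / N : ℝ) * ∑ j, G j ω - b|}) := by
        refine measureReal_mono fun ω hω => ?_
        by_contra hbad
        obtain ⟨hFgood, hGgood⟩ := not_or.1 hbad
        exact hω (abs_div_sub_div_le_of_abs_sub_le hab hεb (not_lt.1 hFgood) (not_lt.1 hGgood))
    _ ≤ _ := measureReal_union_le _ _
    _ ≤ δ := by linarith

/-- Sampling-cost guarantee for Algorithm 1: given `N ≥ (2γ²/ε²)·log(4/δ)` i.i.d. pairs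
`(F_j, G_j)` of real random variables bounded by `γ` with means `a`, `b` satisfying
`|a| ≤ |b|` and `0 < ε < |b|`, the ratio of empirical means is within `2ε/(|b| − ε)`
of `a/b` with probability at least `1 − δ`. -/
theorem stmt2 {Ω : Type*} [MeasurableSpace Ω] (P : Measure Ω) [IsProbabilityMeasure P]
    (γ ε δ : ℝ) (hγ : 0 < γ) (hε : 0 < ε) (hδ0 : 0 < δ) (hδ1 : δ < 1)
    (N : ℕ) (hN1 : 1 ≤ N)
    (hN : 2 * γ ^ 2 / ε ^ 2 * Real.log (4 / δ) ≤ (N : ℝ))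
    (F G : Fin N → Ω → ℝ)
    (hmeas : ∀ j, Measurable fun ω => (F j ω, G j ω))
    (hindep : iIndepFun (fun j ω => (F j ω, G j ω)) P)
    (hident : ∀ j k, IdentDistrib (fun ω => (F j ω, G j ω)) (fun ω => (F k ω, G k ω)) P P)
    (hFbd : ∀ j, ∀ᵐ ω ∂P, |F j ω| ≤ γ)
    (hGbd : ∀ j, ∀ᵐ ω ∂P, |G j ω| ≤ γ)
    (a b : ℝ) (ha : ∀ j, ∫ ω, F j ω ∂P = a) (hb : ∀ j, ∫ ω, G j ω ∂P = b)
    (hab : |a| ≤ |b|) (hεb : ε < |b|) :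
    ENNReal.ofReal (1 - δ) ≤
      P {ω | ((1 / N : ℝ) * ∑ j, G j ω) ≠ 0 ∧
          |((1 / N : ℝ) * ∑ j, F j ω) / ((1 / N : ℝ) * ∑ j, G j ω) - a / b| ≤
            2 * ε / (|b| - ε)} :=
  stmt2_general P γ ε δ hγ hε hδ0 hδ1 N hN F G hmeas hindep hFbd hGbd a b ha hb hab hεb
end

section
/- Let (Ω, ℙ) be a probability space, let γ > 0, R ≥ 1 an integer, ε > 0, δ ∈ (0,1), N ≥ 1 with N ≥ (2γ^{2R}/ε²)·log(4/δ), and let (F_1, G_1), …, (F_N, G_N) be independent, identically distributed pairs of real random variables satisfying |F_j| ≤ γ^R and |G_j| ≤ γ^R almost surely, with common means E[F_j] = a and E[G_j] = b. Assume |a| ≤ |b| and 0 < ε < |b|. Then, writing F̄ = (1/N)∑_j F_j and Ḡ = (1/N)∑_j G_j, with probability at least 1 − δ one has Ḡ ≠ 0 and |F̄/Ḡ − a/b| ≤ 2ε/(|b| − ε). -/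
/-!
By Hoeffding's lemma a centred variable bounded by `c` is sub-Gaussian with variance proxy `c²`,
and proxies add over independent summands, so an empirical mean of `N` such variables deviates
from its mean by at least `ε` with probability at most `2 exp (-N ε² / (2 c²))`; with
`c = γ^R` the sample-size condition makes this at most `δ / 2` for `F̄` and for `Ḡ`. Off these two
events `|F̄ - a|, |Ḡ - b| < ε`, and then `|F̄ / Ḡ - a / b| = |F̄ b - Ḡ a| / (|Ḡ| |b|)` with
`F̄ b - Ḡ a = (F̄ - a) b - a (Ḡ - b)` and `|Ḡ| > |b| - ε`, which gives the bound `2 ε |b| / ((|b| - ε) |b|)`.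
-/

open MeasureTheory ProbabilityTheory
open scoped NNReal

namespace ProbabilityTheory

variable {Ω ι : Type*} [MeasurableSpace Ω] {P : Measure Ω} [IsProbabilityMeasure P]
  [Fintype ι] {X : ι → Ω → ℝ}

lemma hasSubgaussianMGF_sum_sub_integral (hindep : iIndepFun X P)
    (hmeas : ∀ i, AEMeasurable (X i) P) {c : ℝ≥0} (hbd : ∀ i, ∀ᵐ ω ∂P, |X i ω| ≤ c) :
    HasSubgaussianMGF (fun ω ↦ ∑ i, (X i ω - P[X i])) (Fintype.card ι * c ^ 2) P := by
  have hc : ∀ i, HasSubgaussianMGF (fun ω ↦ X i ω - P[X i]) (c ^ 2) P := fun i ↦ by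
    convert hasSubgaussianMGF_of_mem_Icc (hmeas i) (a := -c) (b := c) <| by
      filter_upwards [hbd i] with ω h using abs_le.mp h
    ext
    simp [← two_mul]
  simpa using HasSubgaussianMGF.sum_of_iIndepFun (c := fun _ ↦ c ^ 2) (s := Finset.univ)
    (hindep.comp (fun i x ↦ x - P[X i]) fun _ ↦ measurable_id.sub_const _) fun i _ ↦ hc i

lemma measureReal_abs_mean_sub_ge_le (hindep : iIndepFun X P)
    (hmeas : ∀ i, AEMeasurable (X i) P) {c : ℝ≥0} (hbd : ∀ i, ∀ᵐ ω ∂P, |X i ω| ≤ c)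
    {m : ℝ} (hm : ∀ i, P[X i] = m) [Nonempty ι] {ε : ℝ} (hε : 0 ≤ ε) :
    P.real {ω | ε ≤ |(1 / Fintype.card ι : ℝ) * ∑ i, X i ω - m|} ≤
      2 * Real.exp (-(Fintype.card ι * ε ^ 2) / (2 * c ^ 2)) := by
  set n : ℝ := (Fintype.card ι : ℝ) with hn_def
  have hn : 0 < n := by positivity
  have hS := hasSubgaussianMGF_sum_sub_integral hindep hmeas hbd
  simp only [hm] at hS
  have hsub : {ω | ε ≤ |(1 / n) * ∑ i, X i ω - m|} ⊆
      {ω | n * ε ≤ ∑ i, (X i ω - m)} ∪ {ω | n * ε ≤ (-fun ω ↦ ∑ i, (X i ω - m)) ω} := by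
    intro ω hω
    simp only [Set.mem_ofPred_eq, Set.mem_union, Pi.neg_apply, Finset.sum_sub_distrib,
      Finset.sum_const, Finset.card_univ, nsmul_eq_mul] at hω ⊢
    have hmean : (1 / n) * ∑ i, X i ω - m = (∑ i, X i ω - n * m) / n := by field_simp
    rwa [hmean, abs_div, abs_of_pos hn, le_div_iff₀ hn, mul_comm, le_abs] at hω
  have hexp : Real.exp (-(n * ε) ^ 2 / (2 * ((Fintype.card ι * c ^ 2 : ℝ≥0) : ℝ))) =
      Real.exp (-(n * ε ^ 2) / (2 * c ^ 2)) := by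
    push_cast
    rw [← hn_def]
    field_simp
  calc P.real _ ≤ P.real _ + P.real _ := (measureReal_mono hsub).trans (measureReal_union_le _ _)
    _ ≤ _ := by
      rw [two_mul, ← hexp]
      exact add_le_add (hS.measure_ge_le (by positivity)) (hS.neg.measure_ge_le (by positivity))

lemma ofReal_one_sub_le_of_forall_notMem {S A B : Set Ω} {δ : ℝ} (hA : P.real A ≤ δ / 2)
    (hB : P.real B ≤ δ / 2) (hS : ∀ ω, ω ∉ A → ω ∉ B → ω ∈ S) :
    ENNReal.ofReal (1 - δ) ≤ P S := by
  have hcover : Set.univ ⊆ S ∪ A ∪ B := fun ω _ ↦ by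
    by_contra h
    simp only [Set.mem_union, not_or] at h
    exact h.1.1 (hS ω h.1.2 h.2)
  have := (measureReal_mono (μ := P) hcover).trans <|
    (measureReal_union_le _ _).trans (add_le_add_left (measureReal_union_le _ _) _)
  rw [probReal_univ] at this
  exact (ENNReal.ofReal_le_ofReal (by linarith)).trans_eq ofReal_measureReal

end ProbabilityTheory

lemma two_mul_exp_neg_le_half_of_log_le {c ε δ N : ℝ} (hc : 0 < c) (hε : 0 < ε) (hδ : 0 < δ)
    (hN : 2 * c ^ 2 / ε ^ 2 * Real.log (4 / δ) ≤ N) :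
    2 * Real.exp (-(N * ε ^ 2) / (2 * c ^ 2)) ≤ δ / 2 := by
  have hlog : Real.log (4 / δ) ≤ N * ε ^ 2 / (2 * c ^ 2) := by
    rw [le_div_iff₀ (by positivity)]
    calc Real.log (4 / δ) * (2 * c ^ 2) = 2 * c ^ 2 / ε ^ 2 * Real.log (4 / δ) * ε ^ 2 := by
          field_simp
      _ ≤ N * ε ^ 2 := by gcongr
  calc 2 * Real.exp (-(N * ε ^ 2) / (2 * c ^ 2)) ≤ 2 * Real.exp (-Real.log (4 / δ)) := by
        rw [neg_div]; gcongr
    _ = δ / 2 := by rw [Real.exp_neg, Real.exp_log (by positivity)]; field_simp; norm_num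

lemma abs_div_sub_div_le {u v a b ε : ℝ} (hu : |u - a| ≤ ε) (hv : |v - b| ≤ ε) (hab : |a| ≤ |b|)
    (hεb : ε < |b|) : v ≠ 0 ∧ |u / v - a / b| ≤ 2 * ε / (|b| - ε) := by
  have hε : 0 ≤ ε := (abs_nonneg _).trans hu
  have hb : 0 < |b| := by linarith
  have hv' : |b| - ε ≤ |v| := by linarith [abs_sub_abs_le_abs_sub b v, abs_sub_comm b v]
  have hv0 : v ≠ 0 := abs_pos.mp (by linarith)
  refine ⟨hv0, ?_⟩
  have hnum : |u * b - v * a| ≤ 2 * ε * |b| :=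
    calc |u * b - v * a| = |(u - a) * b - a * (v - b)| := by ring_nf
      _ ≤ |u - a| * |b| + |a| * |v - b| := by
        simpa only [abs_mul] using abs_sub ((u - a) * b) (a * (v - b))
      _ ≤ ε * |b| + |b| * ε := by gcongr
      _ = 2 * ε * |b| := by ring
  calc |u / v - a / b| = |u * b - v * a| / (|v| * |b|) := by
        rw [div_sub_div _ _ hv0 (abs_pos.mp hb), abs_div, abs_mul]
    _ ≤ 2 * ε * |b| / ((|b| - ε) * |b|) := by gcongr
    _ = 2 * ε / (|b| - ε) := mul_div_mul_right _ _ hb.ne'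

theorem stmt3_general {Ω : Type*} [MeasurableSpace Ω] (P : Measure Ω) [IsProbabilityMeasure P]
    (γ ε δ : ℝ) (R : ℕ) (hγ : 0 < γ) (hε : 0 < ε) (hδ0 : 0 < δ)
    (N : ℕ) (hN1 : 1 ≤ N)
    (hN : 2 * γ ^ (2 * R) / ε ^ 2 * Real.log (4 / δ) ≤ (N : ℝ))
    (F G : Fin N → Ω → ℝ)
    (hmeas : ∀ j, Measurable fun ω => (F j ω, G j ω))
    (hindep : iIndepFun (fun j ω => (F j ω, G j ω)) P)
    (hFbd : ∀ j, ∀ᵐ ω ∂P, |F j ω| ≤ γ ^ R)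
    (hGbd : ∀ j, ∀ᵐ ω ∂P, |G j ω| ≤ γ ^ R)
    (a b : ℝ) (ha : ∀ j, ∫ ω, F j ω ∂P = a) (hb : ∀ j, ∫ ω, G j ω ∂P = b)
    (hab : |a| ≤ |b|) (hεb : ε < |b|) :
    ENNReal.ofReal (1 - δ) ≤
      P {ω | ((1 / N : ℝ) * ∑ j, G j ω) ≠ 0 ∧
          |((1 / N : ℝ) * ∑ j, F j ω) / ((1 / N : ℝ) * ∑ j, G j ω) - a / b| ≤
            2 * ε / (|b| - ε)} := by
  lift γ to ℝ≥0 using hγ.le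
  simp only [← NNReal.coe_pow] at hFbd hGbd
  have : Nonempty (Fin N) := ⟨⟨0, hN1⟩⟩
  have htail := two_mul_exp_neg_le_half_of_log_le (c := (γ ^ R : ℝ≥0)) (N := N)
    (by rw [NNReal.coe_pow]; exact pow_pos hγ R) hε hδ0 (by rwa [NNReal.coe_pow, ← pow_mul'])
  have hF := measureReal_abs_mean_sub_ge_le
    (hindep.comp (fun _ ↦ Prod.fst) fun _ ↦ measurable_fst)
    (fun j ↦ (measurable_fst.comp (hmeas j)).aemeasurable) hFbd ha hε.le
  have hG := measureReal_abs_mean_sub_ge_le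
    (hindep.comp (fun _ ↦ Prod.snd) fun _ ↦ measurable_snd)
    (fun j ↦ (measurable_snd.comp (hmeas j)).aemeasurable) hGbd hb hε.le
  simp only [Fintype.card_fin, Function.comp_apply] at hF hG
  refine ofReal_one_sub_le_of_forall_notMem (hF.trans htail) (hG.trans htail) fun ω hFω hGω ↦ ?_
  simp only [Set.mem_ofPred_eq, not_le] at hFω hGω
  exact abs_div_sub_div_le hFω.le hGω.le hab hεb

/-- Sampling-cost guarantee for Algorithm 2 (R repeated applications, overhead `γ^R`):
given `N ≥ (2γ^{2R}/ε²)·log(4/δ)` i.i.d. pairs `(F_j, G_j)` of real random variables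
bounded by `γ^R` with means `a`, `b` satisfying `|a| ≤ |b|` and `0 < ε < |b|`, the ratio
of empirical means is within `2ε/(|b| − ε)` of `a/b` with probability at least `1 − δ`. -/
theorem stmt3 {Ω : Type*} [MeasurableSpace Ω] (P : Measure Ω) [IsProbabilityMeasure P]
    (γ ε δ : ℝ) (R : ℕ) (hR : 1 ≤ R) (hγ : 0 < γ) (hε : 0 < ε) (hδ0 : 0 < δ) (hδ1 : δ < 1)
    (N : ℕ) (hN1 : 1 ≤ N)
    (hN : 2 * γ ^ (2 * R) / ε ^ 2 * Real.log (4 / δ) ≤ (N : ℝ))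
    (F G : Fin N → Ω → ℝ)
    (hmeas : ∀ j, Measurable fun ω => (F j ω, G j ω))
    (hindep : iIndepFun (fun j ω => (F j ω, G j ω)) P)
    (hident : ∀ j k, IdentDistrib (fun ω => (F j ω, G j ω)) (fun ω => (F k ω, G k ω)) P P)
    (hFbd : ∀ j, ∀ᵐ ω ∂P, |F j ω| ≤ γ ^ R)
    (hGbd : ∀ j, ∀ᵐ ω ∂P, |G j ω| ≤ γ ^ R)
    (a b : ℝ) (ha : ∀ j, ∫ ω, F j ω ∂P = a) (hb : ∀ j, ∫ ω, G j ω ∂P = b)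
    (hab : |a| ≤ |b|) (hεb : ε < |b|) :
    ENNReal.ofReal (1 - δ) ≤
      P {ω | ((1 / N : ℝ) * ∑ j, G j ω) ≠ 0 ∧
          |((1 / N : ℝ) * ∑ j, F j ω) / ((1 / N : ℝ) * ∑ j, G j ω) - a / b| ≤
            2 * ε / (|b| - ε)} :=
  stmt3_general P γ ε δ R hγ hε hδ0 N hN1 hN F G hmeas hindep hFbd hGbd a b ha hb hab hεb
end
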